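/- (Deterministic near-optimality of the sketched least squares solution.) Let m, s, d be positive integers, let M be a real m×(d+1) matrix, let F be a real s×m matrix, and let 0 < ε < 1. Suppose that for every vector z ∈ ℝ^{d+1} one has (1 − ε)·‖M z‖ ≤ ‖F M z‖ ≤ (1 + ε)·‖M z‖. Let x̂ ∈ ℝ^d be any minimizer of ‖F M v‖ over all vectors v ∈ ℝ^{d+1} with last coordinate −1 (identifying x̂ with the first d coordinates of such a minimizing v), and let v̂ be the corresponding vector with last coordinate −1. Then for every vector y ∈ ℝ^{d+1} with last coordinate −1, ‖M v̂‖ ≤ ((1 + ε)/(1 − ε)) · ‖M y‖; that is, the sketched solution is optimal for the original least squares problem up to the factor (1+ε)/(1−ε). -/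

import Mathlib

open Matrix

/-- The Euclidean (ℓ²) norm of a real coordinate vector. -/
noncomputable def l2enorm {n : ℕ} (v : Fin n → ℝ) : ℝ :=
  ‖(WithLp.equiv 2 (Fin n → ℝ)).symm v‖

/-- Deterministic near-optimality of the sketched least squares solution: if the sketch
`F` satisfies `(1 − ε)·‖M z‖ ≤ ‖F M z‖ ≤ (1 + ε)·‖M z‖` for all `z`, then any minimizer
`v̂` (with last coordinate `−1`) of the sketched problem `‖F M v‖` is optimal for the
original problem up to the factor `(1 + ε)/(1 − ε)`. -/
theorem sketched_llsp_near_optimal (m s d : ℕ)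
    (hm : 0 < m) (hs : 0 < s) (hd : 0 < d)
    (M : Matrix (Fin m) (Fin (d + 1)) ℝ) (F : Matrix (Fin s) (Fin m) ℝ)
    (ε : ℝ) (hε0 : 0 < ε) (hε1 : ε < 1)
    (hFM : ∀ z : Fin (d + 1) → ℝ,
      (1 - ε) * l2enorm (M.mulVec z) ≤ l2enorm ((F * M).mulVec z) ∧
      l2enorm ((F * M).mulVec z) ≤ (1 + ε) * l2enorm (M.mulVec z))
    (vhat : Fin (d + 1) → ℝ) (hvlast : vhat (Fin.last d) = -1)
    (hmin : ∀ v : Fin (d + 1) → ℝ, v (Fin.last d) = -1 →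
      l2enorm ((F * M).mulVec vhat) ≤ l2enorm ((F * M).mulVec v)) :
    ∀ y : Fin (d + 1) → ℝ, y (Fin.last d) = -1 →
      l2enorm (M.mulVec vhat) ≤ (1 + ε) / (1 - ε) * l2enorm (M.mulVec y) := by
  intro y hy
  have h1 : (1 - ε) * l2enorm (M.mulVec vhat) ≤ l2enorm ((F * M).mulVec vhat) := (hFM vhat).1
  have h2 := hmin y hy
  have h3 : l2enorm ((F * M).mulVec y) ≤ (1 + ε) * l2enorm (M.mulVec y) := (hFM y).2
  have hpos : 0 < 1 - ε := by linarith
  rw [div_mul_eq_mul_div, le_div_iff₀ hpos]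
  nlinarith
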